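/- Category structure of the output of Algorithm STO: assume p_i ≥ 0 and d_max,i ≥ 0 for all i, ŝ(0)_i ≤ s⁺_i for all i ∈ {0,…,l−1}, and ŝ(0)_{l−1} + t_{l−1} ≤ T. Let (s*, d*) be the output of Algorithm STO, with the conventions s*_l := T and s⁺_l := T. Then every index i ∈ {0,…,l−1} satisfies at least one of: (a) d*_i = d_max,i; (b) d*_i = 0; (c) there exists k ≥ 0 with i + k + 1 ≤ l such that s*_j + d*_j + t_j = s*_{j+1} for all j ∈ {i,…,i+k} and s*_{i+k+1} = s⁺_{i+k+1}. -/

import Mathlib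

/-- Feasibility for the service-time LP: time-window bounds on start times,
bounds on service times, and the chain constraints with the convention `s_l := T`. -/
def Feasible (l : ℕ) (T : ℝ) (t dmax smin smax s d : ℕ → ℝ) : Prop :=
  (∀ i < l, smin i ≤ s i ∧ s i ≤ smax i) ∧
  (∀ i < l, 0 ≤ d i ∧ d i ≤ dmax i) ∧
  (∀ i < l, s i + d i + t i ≤ (if i + 1 = l then T else s (i + 1)))

/-- The earliest-start schedule: `ŝ(d)_0 := s⁻_0` and
`ŝ(d)_{i+1} := max { ŝ(d)_i + d_i + t_i, s⁻_{i+1} }`. -/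
def sHat (t smin d : ℕ → ℝ) : ℕ → ℝ
  | 0 => smin 0
  | i + 1 => max (sHat t smin d i + d i + t i) (smin (i + 1))

/-- One iteration of Algorithm STO: process index `a`, setting
`d_a := min { d_max,a, min_{j=a+1}^{l} ( s⁺_j - ŝ(d)_a - Σ_{m=a}^{j-1} (d_m + t_m) ) }`,
with the conventions `s⁺_l := T` and `d_a = 0` inside the sum. -/
def stoStep (l : ℕ) (T : ℝ) (t dmax smin smax : ℕ → ℝ) (d : ℕ → ℝ) (a : ℕ) : ℕ → ℝ :=
  if h : a < l then
    Function.update d a (min (dmax a)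
      ((Finset.Icc (a + 1) l).inf' (Finset.nonempty_Icc.mpr (by omega))
        fun j => (if j = l then T else smax j) - sHat t smin d a
          - ∑ m ∈ Finset.Ico a j, ((if m = a then 0 else d m) + t m)))
  else d

/-- Service times produced by Algorithm STO after processing the indices in `order`,
starting from the all-zero service times. -/
def stoD (l : ℕ) (T : ℝ) (t dmax smin smax : ℕ → ℝ) (order : List ℕ) : ℕ → ℝ :=
  order.foldl (stoStep l T t dmax smin smax) fun _ => 0

/-!
Each index `a` is processed exactly once, and STO keeps `(ŝ(d), d)` feasible: the new `d_a`
is at most the slack of every chain `a → j`, and raising `d_a` delays node `j` by no more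
than that chain. If `d*_a ≠ d_max,a`, then `d_a` was set to the smallest slack, so some chain
`a → j` became tight, i.e. `ŝ_a + Σ_{a ≤ m < j} (d_m + t_m) = s⁺_j`. Afterwards service
times only grow, which can only push that chain later, while feasibility keeps it from ending
after `s⁺_j`. So it stays tight at the end: no node of the chain waits and `s*_j = s⁺_j`.
-/

namespace STO

open Finset Function

/-- `ŝ(d)` extended to the end of the route `j = l`, whose start time is the return time
`ŝ(d)_{l-1} + d_{l-1} + t_{l-1}` (no earliest-start bound applies there). -/
def sHatExt (l : ℕ) (t smin d : ℕ → ℝ) (j : ℕ) : ℝ :=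
  if j = l then sHat t smin d (l - 1) + d (l - 1) + t (l - 1) else sHat t smin d j

/-- The invariant maintained by Algorithm STO. -/
def Admissible (l : ℕ) (T : ℝ) (t smin smax d : ℕ → ℝ) : Prop :=
  (∀ m, 0 ≤ d m) ∧ ∀ j ≤ l, sHatExt l t smin d j ≤ if j = l then T else smax j

/-- The bound on `d_a` imposed by node `j` in the step of Algorithm STO processing `a`. -/
def slack (l : ℕ) (T : ℝ) (t smin smax d : ℕ → ℝ) (a j : ℕ) : ℝ :=
  (if j = l then T else smax j) - sHat t smin d a
    - ∑ m ∈ Ico a j, ((if m = a then 0 else d m) + t m)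

variable {l : ℕ} {T : ℝ} {t dmax smin smax : ℕ → ℝ}

section Schedule

variable {d d' : ℕ → ℝ}

lemma sHat_succ (j : ℕ) :
    sHat t smin d (j + 1) = max (sHat t smin d j + d j + t j) (smin (j + 1)) := rfl

lemma sHat_mono (h : d ≤ d') : ∀ j, sHat t smin d j ≤ sHat t smin d' j
  | 0 => le_rfl
  | j + 1 => max_le_max_right _ (by linarith [sHat_mono h j, h j])

lemma sHat_update_of_le {a : ℕ} {v : ℝ} : ∀ {j}, j ≤ a →
    sHat t smin (update d a v) j = sHat t smin d j
  | 0, _ => rfl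
  | j + 1, hj => by
    rw [sHat_succ, sHat_succ, sHat_update_of_le (by omega), update_of_ne (by omega)]

lemma sHatExt_of_ne {j : ℕ} (hj : j ≠ l) : sHatExt l t smin d j = sHat t smin d j :=
  if_neg hj

lemma sHat_add_le_sHatExt (m : ℕ) :
    sHat t smin d m + d m + t m ≤ sHatExt l t smin d (m + 1) := by
  by_cases h : m + 1 = l
  · rw [sHatExt, if_pos h, show l - 1 = m by omega]
  · rw [sHatExt_of_ne h, sHat_succ]
    exact le_max_left _ _

lemma sHatExt_add_sum_le {i j : ℕ} (hij : i ≤ j) (hj : j ≤ l) :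
    sHatExt l t smin d i + ∑ m ∈ Ico i j, (d m + t m) ≤ sHatExt l t smin d j := by
  induction j, hij using Nat.le_induction with
  | base => simp
  | succ j hij ih =>
    rw [sum_Ico_succ_top hij]
    have := sHat_add_le_sHatExt (l := l) (d := d) (t := t) (smin := smin) j
    rw [← sHatExt_of_ne (show j ≠ l by omega)] at this
    linarith [ih (by omega)]

lemma sHat_succ_le_max {k : ℕ} {B : ℝ}
    (h : sHat t smin d' k + d' k + t k ≤ max (sHat t smin d k + d k + t k) B) :
    sHat t smin d' (k + 1) ≤ max (sHat t smin d (k + 1)) B := by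
  rw [sHat_succ, sHat_succ]
  exact max_le (h.trans (max_le_max_right _ (le_max_left _ _)))
    ((le_max_right _ _).trans (le_max_left _ _))

lemma sHat_add_update_le {a k : ℕ} {v : ℝ} (hak : a ≤ k) :
    sHat t smin (update d a v) k + update d a v k + t k ≤
      max (sHat t smin d k + d k + t k)
        (sHat t smin d a + ∑ m ∈ Ico a (k + 1), (update d a v m + t m)) := by
  induction k, hak using Nat.le_induction with
  | base =>
    rw [sHat_update_of_le le_rfl, sum_Ico_succ_top le_rfl, Ico_self, sum_empty]
    exact le_max_of_le_right (by linarith)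
  | succ k hak ih =>
    rw [update_of_ne (by omega), sum_Ico_succ_top (by omega), update_of_ne (by omega)]
    calc _ = sHat t smin (update d a v) (k + 1) + (d (k + 1) + t (k + 1)) := by ring
      _ ≤ max (sHat t smin d (k + 1))
            (sHat t smin d a + ∑ m ∈ Ico a (k + 1), (update d a v m + t m))
          + (d (k + 1) + t (k + 1)) := by gcongr; exact sHat_succ_le_max ih
      _ = _ := by rw [← max_add_add_right]; congr 1 <;> ring

lemma sHatExt_update_le {a j : ℕ} {v : ℝ} (haj : a < j) (hj : j ≤ l) :
    sHatExt l t smin (update d a v) j ≤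
      max (sHatExt l t smin d j) (sHat t smin d a + ∑ m ∈ Ico a j, (update d a v m + t m)) := by
  obtain ⟨k, rfl⟩ : ∃ k, j = k + 1 := ⟨j - 1, by omega⟩
  have hpush := sHat_add_update_le (t := t) (smin := smin) (d := d) (v := v) (by omega : a ≤ k)
  by_cases hl : k + 1 = l
  · simpa only [sHatExt, if_pos hl, show l - 1 = k by omega] using hpush
  · rw [sHatExt_of_ne hl, sHatExt_of_ne hl]
    exact sHat_succ_le_max hpush

end Schedule

section Algorithm

variable {d d' : ℕ → ℝ}

lemma admissible_zero (hwin : ∀ i < l, sHat t smin (fun _ => 0) i ≤ smax i)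
    (hT : sHat t smin (fun _ => 0) (l - 1) + t (l - 1) ≤ T) :
    Admissible l T t smin smax fun _ => 0 := by
  refine ⟨fun _ => le_rfl, fun j hj => ?_⟩
  by_cases h : j = l
  · simpa [sHatExt, h] using hT
  · rw [sHatExt_of_ne h, if_neg h]
    exact hwin j (by omega)

lemma admissible_update {a : ℕ} {v : ℝ} (hd : Admissible l T t smin smax d) (ha : a < l)
    (hv : 0 ≤ v) (hfit : ∀ j, a < j → j ≤ l →
      sHat t smin d a + ∑ m ∈ Ico a j, (update d a v m + t m) ≤ if j = l then T else smax j) :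
    Admissible l T t smin smax (update d a v) := by
  refine ⟨fun m => ?_, fun j hj => ?_⟩
  · rcases eq_or_ne m a with rfl | hm
    · simpa using hv
    · simpa [update_of_ne hm] using hd.1 m
  · rcases le_or_gt j a with hja | haj
    · have hjl : j ≠ l := by omega
      rw [sHatExt_of_ne hjl, sHat_update_of_le hja, ← sHatExt_of_ne hjl]
      exact hd.2 j hj
    · exact (sHatExt_update_le haj hj).trans (max_le (hd.2 j hj) (hfit j haj hj))

lemma sHat_add_sum_update {a j : ℕ} {v : ℝ} (haj : a < j) :
    sHat t smin d a + ∑ m ∈ Ico a j, (update d a v m + t m) =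
      (if j = l then T else smax j) - slack l T t smin smax d a j + v := by
  have hsplit : ∑ m ∈ Ico a j, (update d a v m + t m) =
      ∑ m ∈ Ico a j, ((if m = a then 0 else d m) + t m) +
        ∑ m ∈ Ico a j, if m = a then v else 0 := by
    rw [← sum_add_distrib]
    refine sum_congr rfl fun m _ => ?_
    rw [update_apply]
    split_ifs <;> ring
  rw [hsplit, sum_ite_eq', if_pos (mem_Ico.2 ⟨le_rfl, haj⟩), slack]
  ring

lemma le_slack {a j : ℕ} (hd : Admissible l T t smin smax d) (haj : a < j) (hj : j ≤ l) :
    d a ≤ slack l T t smin smax d a j := by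
  have hid := sHat_add_sum_update (l := l) (T := T) (smax := smax) (t := t) (smin := smin)
    (d := d) (v := d a) haj
  rw [update_eq_self, ← sHatExt_of_ne (show a ≠ l by omega)] at hid
  linarith [sHatExt_add_sum_le (t := t) (smin := smin) (d := d) haj.le hj, hd.2 j hj]

lemma stoStep_of_lt {a : ℕ} (ha : a < l) :
    stoStep l T t dmax smin smax d a = update d a (min (dmax a)
      ((Icc (a + 1) l).inf' (nonempty_Icc.2 ha) (slack l T t smin smax d a))) := by
  rw [stoStep, dif_pos ha]
  rfl

lemma stoStep_apply_of_ne {a m : ℕ} (hm : m ≠ a) :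
    stoStep l T t dmax smin smax d a m = d m := by
  unfold stoStep
  split_ifs
  exacts [update_of_ne hm _ _, rfl]

lemma admissible_stoStep (hdmax : ∀ i < l, 0 ≤ dmax i) (hd : Admissible l T t smin smax d)
    (a : ℕ) : Admissible l T t smin smax (stoStep l T t dmax smin smax d a) := by
  by_cases ha : a < l
  swap
  · simpa [stoStep, ha] using hd
  rw [stoStep_of_lt ha]
  have hv := min_le_right (dmax a)
    ((Icc (a + 1) l).inf' (nonempty_Icc.2 ha) (slack l T t smin smax d a))
  refine admissible_update hd ha ?_ fun j haj hj => ?_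
  · exact le_min (hdmax a ha) (le_inf' _ _ fun j hj =>
      (hd.1 a).trans (le_slack hd (by simp at hj; omega) (mem_Icc.1 hj).2))
  · rw [sHat_add_sum_update haj]
    linarith [hv.trans (inf'_le _ (mem_Icc.2 ⟨haj, hj⟩))]

lemma admissible_foldl_stoStep (hdmax : ∀ i < l, 0 ≤ dmax i) (L : List ℕ)
    (hd : Admissible l T t smin smax d) :
    Admissible l T t smin smax (L.foldl (stoStep l T t dmax smin smax) d) := by
  induction L generalizing d with
  | nil => exact hd
  | cons a L ih => exact ih (admissible_stoStep hdmax hd a)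

lemma foldl_stoStep_of_not_mem {L : List ℕ} {m : ℕ} (hm : m ∉ L) :
    L.foldl (stoStep l T t dmax smin smax) d m = d m := by
  induction L generalizing d with
  | nil => rfl
  | cons a L ih =>
    rw [List.foldl_cons, ih (fun h => hm (List.mem_cons_of_mem a h)),
      stoStep_apply_of_ne (by rintro rfl; exact hm List.mem_cons_self)]

lemma le_foldl_stoStep {L : List ℕ} (hzero : ∀ m ∈ L, d m = 0)
    (hnonneg : ∀ m, 0 ≤ L.foldl (stoStep l T t dmax smin smax) d m) :
    d ≤ L.foldl (stoStep l T t dmax smin smax) d := fun m => by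
  by_cases hm : m ∈ L
  · exact (hzero m hm).trans_le (hnonneg m)
  · exact (foldl_stoStep_of_not_mem hm).ge

lemma stoStep_self_eq_dmax_or_tight {a : ℕ} (ha : a < l) :
    stoStep l T t dmax smin smax d a a = dmax a ∨
      ∃ j, a < j ∧ j ≤ l ∧
        sHat t smin (stoStep l T t dmax smin smax d a) a +
          ∑ m ∈ Ico a j, (stoStep l T t dmax smin smax d a m + t m) =
            if j = l then T else smax j := by
  rw [stoStep_of_lt ha, update_self]
  rcases min_cases (dmax a) ((Icc (a + 1) l).inf' (nonempty_Icc.2 ha)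
    (slack l T t smin smax d a)) with ⟨hmin, -⟩ | ⟨hmin, -⟩
  · exact Or.inl hmin
  · obtain ⟨j, hj, hjmin⟩ := exists_mem_eq_inf' (nonempty_Icc.2 ha) (slack l T t smin smax d a)
    obtain ⟨haj, hjl⟩ := mem_Icc.1 hj
    refine Or.inr ⟨j, haj, hjl, ?_⟩
    rw [sHat_update_of_le le_rfl, sHat_add_sum_update haj, hmin, hjmin]
    ring

/-- Growing `d` only pushes the chain `i → j` later, while admissibility caps its end
at `s⁺_j`. -/
lemma tight_chain_of_le {i j : ℕ} (hd : Admissible l T t smin smax d) (hle : d' ≤ d)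
    (hij : i < j) (hj : j ≤ l)
    (htight : (if j = l then T else smax j) ≤
      sHat t smin d' i + ∑ m ∈ Ico i j, (d' m + t m)) :
    (∀ m, i ≤ m → m < j →
      sHat t smin d m + d m + t m = if m + 1 = l then T else sHat t smin d (m + 1)) ∧
    (if j = l then T else sHat t smin d j) = if j = l then T else smax j := by
  have hil : i ≠ l := by omega
  have hgrow : (if j = l then T else smax j) ≤ sHat t smin d i + ∑ m ∈ Ico i j, (d m + t m) :=
    htight.trans (add_le_add (sHat_mono hle i) (sum_le_sum fun m _ => by linarith [hle m]))
  have hext : ∀ m, i ≤ m → m ≤ j →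
      sHatExt l t smin d m = sHat t smin d i + ∑ k ∈ Ico i m, (d k + t k) := by
    intro m him hmj
    have h1 := sHatExt_add_sum_le (t := t) (smin := smin) (d := d) him (hmj.trans hj)
    have h2 := sHatExt_add_sum_le (t := t) (smin := smin) (d := d) hmj hj
    rw [sHatExt_of_ne hil] at h1
    linarith [sum_Ico_consecutive (fun k => d k + t k) him hmj, hd.2 j hj]
  have hend : sHatExt l t smin d j = if j = l then T else smax j :=
    (hd.2 j hj).antisymm (hgrow.trans (hext j hij.le le_rfl).ge)
  refine ⟨fun m him hmj => ?_, ?_⟩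
  · have hstep : sHatExt l t smin d (m + 1) = sHat t smin d m + d m + t m := by
      have hnext := hext (m + 1) (by omega) hmj
      have hcur := hext m him hmj.le
      rw [sum_Ico_succ_top him] at hnext
      rw [sHatExt_of_ne (show m ≠ l by omega)] at hcur
      linarith
    split_ifs with hml
    · obtain rfl : j = l := by omega
      rw [if_pos rfl] at hend
      rw [← hstep, hml, hend]
    · rw [← hstep, sHatExt_of_ne hml]
  · split_ifs with hjl
    · rfl
    · rw [← sHatExt_of_ne hjl, hend, if_neg hjl]

end Algorithm

end STO

theorem sto_output_categories_general
    (l : ℕ) (T : ℝ) (t dmax smin smax : ℕ → ℝ)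
    (hdmax : ∀ i < l, 0 ≤ dmax i)
    (hwin : ∀ i < l, sHat t smin (fun _ => 0) i ≤ smax i)
    (hT : sHat t smin (fun _ => 0) (l - 1) + t (l - 1) ≤ T)
    (order : List ℕ) (hperm : order.Perm (List.range l))
    (dstar : ℕ → ℝ) (hdstar : dstar = stoD l T t dmax smin smax order)
    (sstar : ℕ → ℝ) (hsstar : sstar = sHat t smin dstar) :
    ∀ i < l,
      dstar i = dmax i ∨
      dstar i = 0 ∨
      ∃ k : ℕ, i + k + 1 ≤ l ∧
        (∀ j, i ≤ j → j ≤ i + k →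
          sstar j + dstar j + t j = (if j + 1 = l then T else sstar (j + 1))) ∧
        (if i + k + 1 = l then T else sstar (i + k + 1)) =
          (if i + k + 1 = l then T else smax (i + k + 1)) := by
  intro i hi
  obtain ⟨L₁, L₂, rfl⟩ := List.append_of_mem (hperm.mem_iff.2 (List.mem_range.2 hi))
  have hnodup := List.nodup_middle.1 (hperm.nodup_iff.2 List.nodup_range)
  obtain ⟨hi₁₂, hnodup₁₂⟩ := List.nodup_cons.1 hnodup
  have hdisj := List.disjoint_of_nodup_append hnodup₁₂
  set dnext := stoStep l T t dmax smin smax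
    (L₁.foldl (stoStep l T t dmax smin smax) fun _ => 0) i with hdnext
  have hsplit : dstar = L₂.foldl (stoStep l T t dmax smin smax) dnext := by
    rw [hdstar, stoD, List.foldl_append, List.foldl_cons]
  have hnext : STO.Admissible l T t smin smax dnext := STO.admissible_stoStep hdmax
    (STO.admissible_foldl_stoStep hdmax L₁ (STO.admissible_zero hwin hT)) i
  have hstar : STO.Admissible l T t smin smax dstar :=
    hsplit ▸ STO.admissible_foldl_stoStep hdmax L₂ hnext
  have hle : dnext ≤ dstar := hsplit ▸ STO.le_foldl_stoStep
    (fun m hm => by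
      rw [hdnext, STO.stoStep_apply_of_ne (by rintro rfl; exact hi₁₂ (by simp [hm])),
        STO.foldl_stoStep_of_not_mem (fun h => hdisj h hm)])
    (hsplit ▸ hstar.1)
  have hi_star : dstar i = dnext i :=
    hsplit ▸ STO.foldl_stoStep_of_not_mem fun h => hi₁₂ (by simp [h])
  subst hsstar
  rcases STO.stoStep_self_eq_dmax_or_tight hi with h | ⟨j, hij, hjl, htight⟩
  · exact Or.inl (hi_star.trans h)
  · obtain ⟨k, rfl⟩ : ∃ k, j = i + k + 1 := ⟨j - i - 1, by omega⟩
    obtain ⟨hchain, hend⟩ := STO.tight_chain_of_le hstar hle hij hjl htight.ge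
    exact Or.inr (Or.inr ⟨k, hjl, fun m him hmk => hchain m him (by omega), hend⟩)

/-- Category structure of the output of Algorithm STO: every index is (a) fully served,
(b) unserved, or (c) the head of a tight chain ending at a node whose start time hits the
end of its time window (with the conventions `s*_l := T` and `s⁺_l := T`). -/
theorem sto_output_categories
    (l : ℕ) (hl : 1 ≤ l) (T : ℝ) (p t dmax smin smax : ℕ → ℝ)
    (hp : ∀ i < l, 0 ≤ p i)
    (hdmax : ∀ i < l, 0 ≤ dmax i)
    (hwin : ∀ i < l, sHat t smin (fun _ => 0) i ≤ smax i)
    (hT : sHat t smin (fun _ => 0) (l - 1) + t (l - 1) ≤ T)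
    (order : List ℕ) (hperm : order.Perm (List.range l))
    (hsorted : order.Pairwise fun i j => p j ≤ p i)
    (dstar : ℕ → ℝ) (hdstar : dstar = stoD l T t dmax smin smax order)
    (sstar : ℕ → ℝ) (hsstar : sstar = sHat t smin dstar) :
    ∀ i < l,
      dstar i = dmax i ∨
      dstar i = 0 ∨
      ∃ k : ℕ, i + k + 1 ≤ l ∧
        (∀ j, i ≤ j → j ≤ i + k →
          sstar j + dstar j + t j = (if j + 1 = l then T else sstar (j + 1))) ∧
        (if i + k + 1 = l then T else sstar (i + k + 1)) =
          (if i + k + 1 = l then T else smax (i + k + 1)) :=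
  sto_output_categories_general l T t dmax smin smax hdmax hwin hT order hperm dstar hdstar sstar
    hsstar
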